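/- With the above notation, $A^{(m)} = \mathbf{y} + \dfrac{\mathbf{F}}{\mathbf{y}}$ holds in $L$. -/
import Mathlib


/- Setting: `Lm K m` is the field of fractions of the (Laurent) polynomial ring over a field
`K` in commuting variables `yv n` indexed by `n : ZMod m`, with fixed scalars `F n : K`. -/

noncomputable section

variable (K : Type) [Field K] (m : ℕ) [NeZero m]

/-- The ambient field `L`. -/
abbrev Lm := FractionRing (MvPolynomial (ZMod m) K)

/-- The variable `y_n`. -/
def yv (n : ZMod m) : Lm K m :=
  algebraMap (MvPolynomial (ZMod m) K) (Lm K m) (MvPolynomial.X n)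

variable (F : ZMod m → K)

/-- The scalar `F_n` viewed inside `L`. -/
def Fc (n : ZMod m) : Lm K m := algebraMap K (Lm K m) (F n)

/-- `X_n = F_n / (y_n y_{n+1})`. -/
def Xv (n : ZMod m) : Lm K m := Fc K m F n / (yv K m n * yv K m (n + 1))

/-- `P_n = 1 + ∑_{k=0}^{m-2} X_n X_{n-1} ⋯ X_{n-k}`. -/
def Pv (n : ZMod m) : Lm K m :=
  1 + ∑ k ∈ Finset.range (m - 1), ∏ j ∈ Finset.range (k + 1), Xv K m F (n - (j : ZMod m))

/-- `z_n = y_n (1 + X_n)`. -/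
def zv (n : ZMod m) : Lm K m := yv K m n * (1 + Xv K m F n)

/-- `𝐲 = ∏_n y_n`. -/
def boldy : Lm K m := ∏ n : ZMod m, yv K m n

/-- `𝐅 = ∏_n F_n` (viewed in `L`). -/
def boldF : Lm K m := ∏ n : ZMod m, Fc K m F n

/-- `δ = 𝐲 - 𝐅/𝐲`. -/
def deltav : Lm K m := boldy K m - boldF K m F / boldy K m
/-- `C^{(1)} = 1`, `C^{(2)} = z_2`, `C^{(k)} = z_k C^{(k-1)} - F_{k-1} C^{(k-2)}` (indices mod `m`). -/
def Cv : ℕ → Lm K m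
  | 0 => 1
  | 1 => 1
  | 2 => zv K m F ((2 : ℕ) : ZMod m)
  | (k + 3) => zv K m F ((k + 3 : ℕ) : ZMod m) * Cv (k + 2)
      - Fc K m F ((k + 2 : ℕ) : ZMod m) * Cv (k + 1)

/-- The shifted sequence `C_+^{(1)} = 1`, `C_+^{(2)} = z_3`,
`C_+^{(k)} = z_{k+1} C_+^{(k-1)} - F_k C_+^{(k-2)}` (indices mod `m`). -/
def Cpv : ℕ → Lm K m
  | 0 => 1
  | 1 => 1
  | 2 => zv K m F ((3 : ℕ) : ZMod m)
  | (k + 3) => zv K m F ((k + 4 : ℕ) : ZMod m) * Cpv (k + 2)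
      - Fc K m F ((k + 3 : ℕ) : ZMod m) * Cpv (k + 1)

/-- `A^{(m)} = z_1 C^{(m)} - F_m C^{(m-1)} - F_1 C_+^{(m-1)}`. -/
def Av : Lm K m :=
  zv K m F ((1 : ℕ) : ZMod m) * Cv K m F m - Fc K m F ((m : ℕ) : ZMod m) * Cv K m F (m - 1)
    - Fc K m F ((1 : ℕ) : ZMod m) * Cpv K m F (m - 1)

/-- `A^{(m)} = 𝐲 + 𝐅/𝐲` in `L`. -/
lemma yv_ne_zero (n : ZMod m) : yv K m n ≠ 0 := by
  simp only [yv]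
  rw [map_ne_zero_iff _ (IsFractionRing.injective (MvPolynomial (ZMod m) K) (Lm K m))]
  exact MvPolynomial.X_ne_zero n

lemma Fc_eq (n : ZMod m) : Fc K m F n = Xv K m F n * (yv K m n * yv K m (n + 1)) := by
  rw [Xv, div_mul_cancel₀]
  exact mul_ne_zero (yv_ne_zero K m n) (yv_ne_zero K m _)

lemma prod_range_cast (f : ZMod m → Lm K m) :
    ∏ j ∈ Finset.range m, f ((j : ℕ) : ZMod m) = ∏ n : ZMod m, f n := by
  apply Finset.prod_nbij' (fun j => ((j : ℕ) : ZMod m)) (fun n => n.val)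
  · intro a ha; exact Finset.mem_univ _
  · intro n _; exact Finset.mem_range.mpr (ZMod.val_lt n)
  · intro a ha; exact ZMod.val_cast_of_lt (Finset.mem_range.mp ha)
  · intro n _; exact ZMod.natCast_zmod_val n
  · intro a ha; rfl

lemma prod_Ico_cast (f : ZMod m → Lm K m) (a : ℕ) :
    ∏ j ∈ Finset.Ico a (a + m), f ((j : ℕ) : ZMod m) = ∏ n : ZMod m, f n := by
  rw [Finset.prod_Ico_eq_prod_range]
  simp only [Nat.add_sub_cancel_left, Nat.cast_add]
  rw [prod_range_cast K m (fun n => f ((a : ZMod m) + n))]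
  exact Fintype.prod_equiv (Equiv.addLeft (a : ZMod m)) _ _ (fun n => rfl)

def Tgen (s : ℕ) : ℕ → Lm K m
  | 0 => 0
  | (k + 1) => 1 + Xv K m F ((k + 1 + s : ℕ) : ZMod m) * Tgen s k

lemma C_formula (k : ℕ) : Cv K m F (k + 1)
    = (∏ j ∈ Finset.Ico 2 (k + 2), yv K m ((j : ℕ) : ZMod m)) * Tgen K m F 0 (k + 1) := by
  induction k using Nat.twoStepInduction with
  | zero => simp [Cv, Tgen]
  | one =>
    simp only [Cv, Tgen, zv]
    norm_num [Finset.prod_Ico_eq_prod_range]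
  | more n ih1 ih2 =>
    simp only [show n + 1 + 2 = n + 3 from rfl] at ih2
    have e1 : Cv K m F (n + 3) = zv K m F ((n + 3 : ℕ) : ZMod m) * Cv K m F (n + 2)
      - Fc K m F ((n + 2 : ℕ) : ZMod m) * Cv K m F (n + 1) := rfl
    have hc : (((n + 2 : ℕ) : ZMod m) + 1) = ((n + 3 : ℕ) : ZMod m) := by push_cast; ring
    have e2 : Fc K m F ((n + 2 : ℕ) : ZMod m)
        = Xv K m F ((n + 2 : ℕ) : ZMod m)
          * (yv K m ((n + 2 : ℕ) : ZMod m) * yv K m ((n + 3 : ℕ) : ZMod m)) := by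
      rw [Fc_eq, hc]
    have p1 : ∏ j ∈ Finset.Ico 2 (n + 4), yv K m ((j : ℕ) : ZMod m)
        = (∏ j ∈ Finset.Ico 2 (n + 3), yv K m ((j : ℕ) : ZMod m))
          * yv K m ((n + 3 : ℕ) : ZMod m) := by
      rw [Finset.prod_Ico_succ_top (by omega)]
    have p2 : ∏ j ∈ Finset.Ico 2 (n + 3), yv K m ((j : ℕ) : ZMod m)
        = (∏ j ∈ Finset.Ico 2 (n + 2), yv K m ((j : ℕ) : ZMod m))
          * yv K m ((n + 2 : ℕ) : ZMod m) := by
      rw [Finset.prod_Ico_succ_top (by omega)]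
    have t3 : Tgen K m F 0 (n + 3)
        = 1 + Xv K m F ((n + 3 : ℕ) : ZMod m) * Tgen K m F 0 (n + 2) := rfl
    have t2 : Tgen K m F 0 (n + 2)
        = 1 + Xv K m F ((n + 2 : ℕ) : ZMod m) * Tgen K m F 0 (n + 1) := rfl
    rw [e1, ih1, ih2, e2, p1, p2, t3, t2, zv]
    ring

lemma Cp_formula (k : ℕ) : Cpv K m F (k + 1)
    = (∏ j ∈ Finset.Ico 3 (k + 3), yv K m ((j : ℕ) : ZMod m)) * Tgen K m F 1 (k + 1) := by
  induction k using Nat.twoStepInduction with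
  | zero => simp [Cpv, Tgen]
  | one =>
    simp only [Cpv, Tgen, zv]
    norm_num [Finset.prod_Ico_eq_prod_range]
  | more n ih1 ih2 =>
    simp only [show n + 1 + 3 = n + 4 from rfl] at ih2
    have e1 : Cpv K m F (n + 3) = zv K m F ((n + 4 : ℕ) : ZMod m) * Cpv K m F (n + 2)
      - Fc K m F ((n + 3 : ℕ) : ZMod m) * Cpv K m F (n + 1) := rfl
    have hc : (((n + 3 : ℕ) : ZMod m) + 1) = ((n + 4 : ℕ) : ZMod m) := by push_cast; ring
    have e2 : Fc K m F ((n + 3 : ℕ) : ZMod m)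
        = Xv K m F ((n + 3 : ℕ) : ZMod m)
          * (yv K m ((n + 3 : ℕ) : ZMod m) * yv K m ((n + 4 : ℕ) : ZMod m)) := by
      rw [Fc_eq, hc]
    have p1 : ∏ j ∈ Finset.Ico 3 (n + 5), yv K m ((j : ℕ) : ZMod m)
        = (∏ j ∈ Finset.Ico 3 (n + 4), yv K m ((j : ℕ) : ZMod m))
          * yv K m ((n + 4 : ℕ) : ZMod m) := by
      rw [Finset.prod_Ico_succ_top (by omega)]
    have p2 : ∏ j ∈ Finset.Ico 3 (n + 4), yv K m ((j : ℕ) : ZMod m)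
        = (∏ j ∈ Finset.Ico 3 (n + 3), yv K m ((j : ℕ) : ZMod m))
          * yv K m ((n + 3 : ℕ) : ZMod m) := by
      rw [Finset.prod_Ico_succ_top (by omega)]
    have t3 : Tgen K m F 1 (n + 3)
        = 1 + Xv K m F ((n + 4 : ℕ) : ZMod m) * Tgen K m F 1 (n + 2) := rfl
    have t2 : Tgen K m F 1 (n + 2)
        = 1 + Xv K m F ((n + 3 : ℕ) : ZMod m) * Tgen K m F 1 (n + 1) := rfl
    rw [e1, ih1, ih2, e2, p1, p2, t3, t2, zv]
    ring

lemma T_diff (k : ℕ) : Tgen K m F 0 (k + 1) - Tgen K m F 1 k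
    = ∏ j ∈ Finset.Ico 2 (k + 2), Xv K m F ((j : ℕ) : ZMod m) := by
  induction k with
  | zero => simp [Tgen]
  | succ n ih =>
    have t1 : Tgen K m F 0 (n + 2)
        = 1 + Xv K m F ((n + 2 : ℕ) : ZMod m) * Tgen K m F 0 (n + 1) := rfl
    have t2 : Tgen K m F 1 (n + 1)
        = 1 + Xv K m F ((n + 2 : ℕ) : ZMod m) * Tgen K m F 1 n := rfl
    rw [t1, t2, Finset.prod_Ico_succ_top (by omega), ← ih]
    push_cast
    ring

lemma boldy_ne_zero : boldy K m ≠ 0 :=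
  Finset.prod_ne_zero_iff.mpr fun n _ => yv_ne_zero K m n

lemma prod_shift : ∏ n : ZMod m, yv K m (n + 1) = boldy K m :=
  Fintype.prod_equiv (Equiv.addRight (1 : ZMod m)) _ _ (fun n => rfl)

lemma prodX : ∏ n : ZMod m, Xv K m F n = boldF K m F / (boldy K m * boldy K m) := by
  simp only [Xv]
  rw [Finset.prod_div_distrib, Finset.prod_mul_distrib, prod_shift]
  rfl

theorem stmt_3 (hm : 2 ≤ m) (hF : ∀ n, F n ≠ 0) :
    Av K m F = boldy K m + boldF K m F / boldy K m := by
  obtain ⟨M, rfl⟩ : ∃ M, m = M + 2 := ⟨m - 2, by omega⟩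
  clear hm hF
  have hA : Av K (M + 2) F
      = zv K (M + 2) F ((1 : ℕ) : ZMod (M + 2)) * Cv K (M + 2) F (M + 2)
        - Fc K (M + 2) F ((M + 2 : ℕ) : ZMod (M + 2)) * Cv K (M + 2) F (M + 1)
        - Fc K (M + 2) F ((1 : ℕ) : ZMod (M + 2)) * Cpv K (M + 2) F (M + 1) := rfl
  have c1 := C_formula K (M + 2) F (M + 1)
  have c0 := C_formula K (M + 2) F M
  have cp := Cp_formula K (M + 2) F M
  simp only [show M + 1 + 1 = M + 2 from rfl, show M + 1 + 2 = M + 3 from rfl] at c1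
  have hy := prod_Ico_cast K (M + 2) (yv K (M + 2)) 1
  rw [show 1 + (M + 2) = M + 3 by omega] at hy
  have hS : ∏ j ∈ Finset.Ico 1 (M + 3), yv K (M + 2) ((j : ℕ) : ZMod (M + 2))
      = yv K (M + 2) ((1 : ℕ) : ZMod (M + 2))
        * ∏ j ∈ Finset.Ico 2 (M + 3), yv K (M + 2) ((j : ℕ) : ZMod (M + 2)) := by
    have := Finset.prod_eq_prod_Ico_succ_bot (a := 1) (b := M + 3) (by omega)
      (fun j => yv K (M + 2) ((j : ℕ) : ZMod (M + 2)))
    simpa using this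
  have pm : ∏ j ∈ Finset.Ico 2 (M + 3), yv K (M + 2) ((j : ℕ) : ZMod (M + 2))
      = (∏ j ∈ Finset.Ico 2 (M + 2), yv K (M + 2) ((j : ℕ) : ZMod (M + 2)))
        * yv K (M + 2) ((M + 2 : ℕ) : ZMod (M + 2)) :=
    Finset.prod_Ico_succ_top (by omega) _
  have pb : ∏ j ∈ Finset.Ico 2 (M + 3), yv K (M + 2) ((j : ℕ) : ZMod (M + 2))
      = yv K (M + 2) ((2 : ℕ) : ZMod (M + 2))
        * ∏ j ∈ Finset.Ico 3 (M + 3), yv K (M + 2) ((j : ℕ) : ZMod (M + 2)) := by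
    have := Finset.prod_eq_prod_Ico_succ_bot (a := 2) (b := M + 3) (by omega)
      (fun j => yv K (M + 2) ((j : ℕ) : ZMod (M + 2)))
    simpa using this
  have hQ3 := pb.symm.trans pm
  have hyQ : boldy K (M + 2) = yv K (M + 2) ((1 : ℕ) : ZMod (M + 2))
      * ((∏ j ∈ Finset.Ico 2 (M + 2), yv K (M + 2) ((j : ℕ) : ZMod (M + 2)))
        * yv K (M + 2) ((M + 2 : ℕ) : ZMod (M + 2))) := by
    rw [← pm, ← hS, hy]; rfl
  have hzero : ((M + 2 : ℕ) : ZMod (M + 2)) = 0 := ZMod.natCast_self _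
  have hc1 : (((M + 2 : ℕ) : ZMod (M + 2)) + 1) = ((1 : ℕ) : ZMod (M + 2)) := by
    rw [hzero, zero_add, Nat.cast_one]
  have hc2 : (((1 : ℕ) : ZMod (M + 2)) + 1) = ((2 : ℕ) : ZMod (M + 2)) := by push_cast; ring
  have e2m : Fc K (M + 2) F ((M + 2 : ℕ) : ZMod (M + 2))
      = Xv K (M + 2) F ((M + 2 : ℕ) : ZMod (M + 2))
        * (yv K (M + 2) ((M + 2 : ℕ) : ZMod (M + 2)) * yv K (M + 2) ((1 : ℕ) : ZMod (M + 2))) := by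
    rw [Fc_eq, hc1]
  have e21 : Fc K (M + 2) F ((1 : ℕ) : ZMod (M + 2))
      = Xv K (M + 2) F ((1 : ℕ) : ZMod (M + 2))
        * (yv K (M + 2) ((1 : ℕ) : ZMod (M + 2)) * yv K (M + 2) ((2 : ℕ) : ZMod (M + 2))) := by
    rw [Fc_eq, hc2]
  have ht : Tgen K (M + 2) F 0 (M + 2)
      = 1 + Xv K (M + 2) F ((M + 2 : ℕ) : ZMod (M + 2)) * Tgen K (M + 2) F 0 (M + 1) := rfl
  have key1 : Av K (M + 2) F = boldy K (M + 2)
      * (1 + Xv K (M + 2) F ((1 : ℕ) : ZMod (M + 2))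
        * (Tgen K (M + 2) F 0 (M + 2) - Tgen K (M + 2) F 1 (M + 1))) := by
    rw [hA, c1, c0, cp, e2m, e21, ht, hyQ, pm, zv]
    linear_combination (-(yv K (M + 2) ((1 : ℕ) : ZMod (M + 2)))
      * Xv K (M + 2) F ((1 : ℕ) : ZMod (M + 2)) * Tgen K (M + 2) F 1 (M + 1)) * hQ3
  have td := T_diff K (M + 2) F (M + 1)
  simp only [show M + 1 + 1 = M + 2 from rfl, show M + 1 + 2 = M + 3 from rfl] at td
  have hx := prod_Ico_cast K (M + 2) (Xv K (M + 2) F) 1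
  rw [show 1 + (M + 2) = M + 3 by omega] at hx
  have hxS : ∏ j ∈ Finset.Ico 1 (M + 3), Xv K (M + 2) F ((j : ℕ) : ZMod (M + 2))
      = Xv K (M + 2) F ((1 : ℕ) : ZMod (M + 2))
        * ∏ j ∈ Finset.Ico 2 (M + 3), Xv K (M + 2) F ((j : ℕ) : ZMod (M + 2)) := by
    have := Finset.prod_eq_prod_Ico_succ_bot (a := 1) (b := M + 3) (by omega)
      (fun j => Xv K (M + 2) F ((j : ℕ) : ZMod (M + 2)))
    simpa using this
  have key2 : Xv K (M + 2) F ((1 : ℕ) : ZMod (M + 2))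
      * (Tgen K (M + 2) F 0 (M + 2) - Tgen K (M + 2) F 1 (M + 1))
      = boldF K (M + 2) F / (boldy K (M + 2) * boldy K (M + 2)) := by
    rw [td, ← hxS, hx, prodX]
  rw [key1, key2]
  have h0 := boldy_ne_zero K (M + 2)
  field_simp
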